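/- arXiv:1610.05944 — 3 statements merged into one kernel-verified Lean document; each statement's English description precedes it below -/
import Mathlib

section
/- If N is a finite normal subgroup of a group G, then t(G) = |N|·t(G/N), where t(X) is the maximal order of a finite subgroup of X. -/
/-!
The finite subgroups of `G/N` correspond to the finite subgroups of `G` containing `N`, via
`K ↦ π⁻¹(K)` with `|π⁻¹(K)| = |N|·|K|`; and every finite subgroup `H` of `G` lies in the finite
subgroup `π⁻¹(π(H))`. Hence both suprema are taken over the same values up to the factor `|N|`.
-/

/-- `t G` is the supremum of the orders of finite subgroups of `G` (`⊤ : ℕ∞` if unbounded). -/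
noncomputable def maxFinSubgroupOrder (G : Type*) [Group G] : ℕ∞ :=
  ⨆ (H : Subgroup G) (_ : Finite H), (Nat.card H : ℕ∞)

lemma card_le_maxFinSubgroupOrder {G : Type*} [Group G] (H : Subgroup G) [Finite H] :
    (Nat.card H : ℕ∞) ≤ maxFinSubgroupOrder G :=
  le_iSup₂_of_le H ‹_› le_rfl

instance Subgroup.finite_map {G G' : Type*} [Group G] [Group G'] (f : G →* G')
    (H : Subgroup G) [Finite H] : Finite (H.map f) :=
  Finite.of_surjective _ (f.subgroupMap_surjective H)

namespace QuotientGroup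

variable {G : Type*} [Group G] (N : Subgroup G) [N.Normal]

lemma card_comap_mk' (K : Subgroup (G ⧸ N)) :
    Nat.card (K.comap (mk' N)) = Nat.card N * Nat.card K :=
  card_preimage_mk N K

lemma finite_comap_mk' [Finite N] (K : Subgroup (G ⧸ N)) [Finite K] :
    Finite (K.comap (mk' N)) :=
  Nat.finite_of_card_ne_zero <| by
    rw [card_comap_mk']
    exact (Nat.mul_pos Nat.card_pos Nat.card_pos).ne'

lemma card_le_card_mul_card_map [Finite N] (H : Subgroup G) [Finite H] :
    Nat.card H ≤ Nat.card N * Nat.card (H.map (mk' N)) := by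
  have := finite_comap_mk' N (H.map (mk' N))
  rw [← card_comap_mk']
  exact Subgroup.card_le_of_le (Subgroup.le_comap_map _ H)

end QuotientGroup

open QuotientGroup in
theorem stmt_2 (G : Type*) [Group G] (N : Subgroup G) (hN : N.Normal) (hfin : Finite N) :
    maxFinSubgroupOrder G = (Nat.card N : ℕ∞) * maxFinSubgroupOrder (G ⧸ N) := by
  apply le_antisymm
  · refine iSup₂_le fun H _ ↦ ?_
    calc (Nat.card H : ℕ∞) ≤ Nat.card N * Nat.card (H.map (mk' N)) := by
          exact_mod_cast card_le_card_mul_card_map N H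
      _ ≤ Nat.card N * maxFinSubgroupOrder (G ⧸ N) := by
          gcongr
          exact card_le_maxFinSubgroupOrder _
  · refine (ENat.mul_iSup _ _).trans_le (iSup_le fun K ↦ ?_)
    rw [ENat.mul_iSup]
    refine iSup_le fun _ ↦ ?_
    have := finite_comap_mk' N K
    simpa only [card_comap_mk', Nat.cast_mul] using card_le_maxFinSubgroupOrder (K.comap (mk' N))
end

section
/- Let G = C₂ ≀ ℤ be the wreath product of the cyclic group of order 2 with ℤ, π : G → ℤ the projection onto the top group, and H_n = π⁻¹(nℤ). Then the torsion subgroup of the abelianization of H_n has order 2ⁿ. -/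
/-!
`H_n` is the semidirect product `B ⋊ nℤ`, with `nℤ` acting on `B = ⊕_ℤ C₂` by shifts. For a
semidirect product `N ⋊ K` with `K` abelian, a `K`-invariant homomorphism `f : N → A` onto an
abelian group, with a section `s` such that `s (f x)` and `x` agree in the abelianization, yields
`(N ⋊ K)ᵃᵇ ≅ A × K`. Folding positions modulo `n` is such an `f`, onto `A = ⊕_{ℤ/n} C₂`: the
section lifts a residue to a representative, and a lamp at `i` is conjugate to the lamp at
`i + n m` by the `m`-th power of the generator of `nℤ`. Hence `H_nᵃᵇ ≅ C₂ⁿ × ℤ`, whose torsion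
subgroup is `C₂ⁿ`.
-/

namespace Stmt12

/-- The base group `B = ⊕_{ℤ} C₂` of the lamplighter group, written multiplicatively. -/
abbrev B := Multiplicative (ℤ →₀ ZMod 2)

/-- The shift action of `ℤ` on `B`. -/
noncomputable def shiftHom : Multiplicative ℤ →* MulAut B :=
  MonoidHom.mk'
    (fun n => AddEquiv.toMultiplicative (Finsupp.domCongr (Equiv.addRight n.toAdd)))
    (by
      intro a b
      ext f
      simp [Equiv.addRight, Finsupp.equivMapDomain_apply]
      congr 1
      ring)

/-- The lamplighter group `G = C₂ ≀ ℤ`, the restricted wreath product. -/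
abbrev Lamplighter := B ⋊[shiftHom] Multiplicative ℤ

/-- The projection `π : G → ℤ` onto the top group. -/
noncomputable def proj : Lamplighter →* Multiplicative ℤ := SemidirectProduct.rightHom

/-- `H n = π⁻¹(nℤ)`. -/
noncomputable def Hsub (n : ℕ) : Subgroup Lamplighter :=
  Subgroup.comap proj (Subgroup.zpowers (Multiplicative.ofAdd (n : ℤ)))

end Stmt12

namespace SemidirectProduct

section

variable {N G : Type*} [Group N] [Group G] (φ : G →* MulAut N) (K : Subgroup G)

def inlComap : N →* K.comap (rightHom : N ⋊[φ] G →* G) :=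
  inl.codRestrict _ fun x => by simp [K.one_mem]

def inrComap : K →* K.comap (rightHom : N ⋊[φ] G →* G) :=
  (inr.comp K.subtype).codRestrict _ fun k => by simp

variable {φ K}

@[simp]
theorem coe_inlComap (x : N) : (inlComap φ K x : N ⋊[φ] G) = inl x := rfl

@[simp]
theorem coe_inrComap (k : K) : (inrComap φ K k : N ⋊[φ] G) = inr (k : G) := rfl

theorem inlComap_left_mul_inrComap_right (h : K.comap (rightHom : N ⋊[φ] G →* G)) :
    inlComap φ K (h : N ⋊[φ] G).left * inrComap φ K ⟨_, h.2⟩ = h :=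
  Subtype.ext (inl_left_mul_inr_right _)

theorem abelianization_of_inlComap_aut {k : G} (hk : k ∈ K) (x : N) :
    Abelianization.of (inlComap φ K (φ k x)) = Abelianization.of (inlComap φ K x) := by
  have : inlComap φ K (φ k x) =
      inrComap φ K ⟨k, hk⟩ * inlComap φ K x * (inrComap φ K ⟨k, hk⟩)⁻¹ :=
    Subtype.ext <| by simp [inl_aut]
  rw [this, map_mul, map_mul, map_inv, mul_inv_cancel_comm]

end

variable {N G A : Type*} [Group N] [CommGroup G] [CommGroup A] {φ : G →* MulAut N}
  {K : Subgroup G}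

def toProdOfInvariant (f : N →* A) (hf : ∀ k ∈ K, ∀ x, f (φ k x) = f x) :
    K.comap (rightHom : N ⋊[φ] G →* G) →* A × K where
  toFun h := (f (h : N ⋊[φ] G).left, ⟨_, h.2⟩)
  map_one' := by ext <;> simp
  map_mul' h h' := by ext <;> simp [hf (h : N ⋊[φ] G).right h.2]

def abelianizationComapEquiv (f : N →* A) (s : A →* N) (hfs : ∀ a, f (s a) = a)
    (hf : ∀ k ∈ K, ∀ x, f (φ k x) = f x)
    (hs : ∀ x, Abelianization.of (inlComap φ K (s (f x))) = Abelianization.of (inlComap φ K x)) :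
    Abelianization (K.comap (rightHom : N ⋊[φ] G →* G)) ≃* A × K :=
  MonoidHom.toMulEquiv (Abelianization.lift (toProdOfInvariant f hf))
    (MonoidHom.coprod (Abelianization.of.comp ((inlComap φ K).comp s))
      (Abelianization.of.comp (inrComap φ K)))
    (by
      ext h
      conv_rhs => rw [← inlComap_left_mul_inrComap_right h]
      simp [toProdOfInvariant, hs])
    (by
      ext <;> simp [toProdOfInvariant, hfs])

end SemidirectProduct

namespace CommGroup

variable {X Y : Type*} [CommGroup X] [CommGroup Y]

theorem card_torsion_congr (e : X ≃* Y) : Nat.card (torsion X) = Nat.card (torsion Y) := by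
  rw [← e.map_torsion, Subgroup.card_map_of_injective e.injective]

theorem card_torsion_prod_of_isMulTorsionFree [Finite X] [IsMulTorsionFree Y] :
    Nat.card (torsion (X × Y)) = Nat.card X := by
  rw [torsion_prod, torsion_eq_top_iff.2 isMulTorsion_of_finite,
    isMulTorsionFree_iff_torsion_eq_bot.1 ‹_›, Nat.card_congr (Subgroup.prodEquiv _ _).toEquiv,
    Nat.card_prod, Subgroup.card_top, Subgroup.card_bot, mul_one]

end CommGroup

namespace Stmt12

open SemidirectProduct Multiplicative

theorem shiftHom_ofAdd_single (t : Multiplicative ℤ) (i : ℤ) (c : ZMod 2) :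
    shiftHom t (ofAdd (Finsupp.single i c)) = ofAdd (Finsupp.single (i + t.toAdd) c) := by
  simp [shiftHom]

section

variable (n : ℕ)

noncomputable def foldMod : B →* Multiplicative (ZMod n →₀ ZMod 2) :=
  AddMonoidHom.toMultiplicative (Finsupp.mapDomain.addMonoidHom Int.cast)

noncomputable def liftMod : Multiplicative (ZMod n →₀ ZMod 2) →* B :=
  AddMonoidHom.toMultiplicative (Finsupp.mapDomain.addMonoidHom fun j : ZMod n => (j.cast : ℤ))

theorem foldMod_liftMod (a : Multiplicative (ZMod n →₀ ZMod 2)) :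
    foldMod n (liftMod n a) = a := by
  have : (Int.cast ∘ fun j : ZMod n => (j.cast : ℤ)) = id := funext ZMod.intCast_zmod_cast
  simp [foldMod, liftMod, ← Finsupp.mapDomain_comp, this]

theorem foldMod_shiftHom {t : Multiplicative ℤ} (ht : t ∈ Subgroup.zpowers (ofAdd (n : ℤ)))
    (b : B) : foldMod n (shiftHom t b) = foldMod n b := by
  obtain ⟨m, rfl⟩ := ht
  have : (Int.cast ∘ (· + m * n) : ℤ → ZMod n) = Int.cast := by
    funext i; simp
  simp [foldMod, shiftHom, Finsupp.equivMapDomain_eq_mapDomain, ← Finsupp.mapDomain_comp, this]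

theorem of_inlComap_single_eq {i j : ℤ} (hij : (i : ZMod n) = j) (c : ZMod 2) :
    Abelianization.of
        (inlComap shiftHom (Subgroup.zpowers (ofAdd (n : ℤ))) (ofAdd (Finsupp.single i c))) =
      Abelianization.of (inlComap shiftHom _ (ofAdd (Finsupp.single j c))) := by
  obtain ⟨m, hm⟩ := (ZMod.intCast_eq_intCast_iff_dvd_sub i j n).1 hij
  have hmem : ofAdd ((n : ℤ) * m) ∈ Subgroup.zpowers (ofAdd (n : ℤ)) :=
    ⟨m, by dsimp only; rw [← ofAdd_zsmul, smul_eq_mul, mul_comm]⟩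
  rw [← abelianization_of_inlComap_aut hmem, shiftHom_ofAdd_single, toAdd_ofAdd, ← hm,
    add_sub_cancel]

theorem of_inlComap_liftMod_foldMod (b : B) :
    Abelianization.of
        (inlComap shiftHom (Subgroup.zpowers (ofAdd (n : ℤ))) (liftMod n (foldMod n b))) =
      Abelianization.of (inlComap shiftHom _ b) := by
  induction b using Multiplicative.rec with | ofAdd g => ?_
  induction g using Finsupp.induction_linear with
  | zero => simp
  | add f g hf hg => simp only [ofAdd_add, map_mul, hf, hg]
  | single i c =>
    simpa [foldMod, liftMod] using
      of_inlComap_single_eq n (ZMod.intCast_zmod_cast (i : ZMod n)) c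

noncomputable def abelianizationHsubEquiv :
    Abelianization (Hsub n) ≃*
      Multiplicative (ZMod n →₀ ZMod 2) × Subgroup.zpowers (ofAdd (n : ℤ)) :=
  abelianizationComapEquiv (foldMod n) (liftMod n) (foldMod_liftMod n)
    (fun _ => foldMod_shiftHom n) (of_inlComap_liftMod_foldMod n)

end

theorem stmt_12 (n : ℕ) (hn : 1 ≤ n) :
    Nat.card (CommGroup.torsion (Abelianization (Hsub n))) = 2 ^ n := by
  have : NeZero n := ⟨by omega⟩
  rw [CommGroup.card_torsion_congr (abelianizationHsubEquiv n),
    CommGroup.card_torsion_prod_of_isMulTorsionFree,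
    Nat.card_congr (toAdd.trans Finsupp.equivFunOnFinite), Nat.card_fun, Nat.card_zmod,
    Nat.card_zmod]

end Stmt12
end

section
/- Let H be a finitely generated nilpotent group of class at most 2 and L a subgroup of finite index in H. Then the derived subgroup L' has finite index in H'. -/
/-!
Since `H'` is central, the commutator map is bimultiplicative. Hence `H'` is generated by the
finitely many commutators of generators of `H`, and is a finitely generated abelian group. If
`e = [H : L]!`, then `a ^ e ∈ L` for every `a`, so `[a, b] ^ (e * e) = [a ^ e, b ^ e] ∈ L'`; as `H'`
is abelian, every element of `H'` has its `e * e`-th power in `L'`. Thus `H' / (L' ∩ H')` is a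
finitely generated abelian torsion group, hence finite.
-/

open scoped commutatorElement IsMulCommutative Nat

namespace Subgroup

variable {G : Type*} [Group G]

theorem index_ne_zero_of_forall_pow_mem {A : Type*} [CommGroup A] [Group.FG A] {M : Subgroup A}
    {n : ℕ} (hn : n ≠ 0) (h : ∀ a, a ^ n ∈ M) : M.index ≠ 0 := by
  have torsion : IsMulTorsion (A ⧸ M) := by
    intro q
    obtain ⟨a, rfl⟩ := QuotientGroup.mk_surjective q
    refine isOfFinOrder_iff_pow_eq_one.mpr ⟨n, Nat.pos_of_ne_zero hn, ?_⟩
    rw [← QuotientGroup.mk_pow, QuotientGroup.eq_one_iff]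
    exact h a
  have : Finite (A ⧸ M) := CommGroup.finite_of_fg_isMulTorsion _ torsion
  exact index_ne_zero_of_finite

theorem relIndex_ne_zero_of_forall_pow_mem {K : Subgroup G} [IsMulCommutative K] (hK : K.FG)
    {M : Subgroup G} {n : ℕ} (hn : n ≠ 0) (h : ∀ k ∈ K, k ^ n ∈ M) : M.relIndex K ≠ 0 := by
  have : Group.FG K := (Group.fg_iff_subgroup_fg K).mpr hK
  exact index_ne_zero_of_forall_pow_mem hn fun k => mem_subgroupOf.mpr (h k k.2)

theorem pow_factorial_index_mem {L : Subgroup G} (hL : L.index ≠ 0) (a : G) :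
    a ^ L.index ! ∈ L :=
  pow_mem_of_index_ne_zero_of_dvd hL a fun _ hm hle => Nat.dvd_factorial hm hle

end Subgroup

section CommutatorCentral

open Subgroup

variable {G : Type*} [Group G] (hG : ⁅(⊤ : Subgroup G), ⊤⁆ ≤ center G)
include hG

theorem commute_commutatorElement (a b c : G) : Commute ⁅a, b⁆ c :=
  (mem_center_iff.mp (hG (commutator_mem_commutator (mem_top a) (mem_top b))) c).symm

theorem commutatorElement_mul_left_of_le_center (a b c : G) :
    ⁅a * b, c⁆ = ⁅a, c⁆ * ⁅b, c⁆ := by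
  rw [commutatorElement_mul_left_eq_conj_mul, (commute_commutatorElement hG b c a).symm.eq,
    mul_inv_cancel_right, (commute_commutatorElement hG b c _).eq]

theorem commutatorElement_inv_left_of_le_center (a b : G) : ⁅a⁻¹, b⁆ = ⁅a, b⁆⁻¹ := by
  rw [commutatorElement_inv_left, mul_assoc, (commute_commutatorElement hG b a a).eq,
    inv_mul_cancel_left, commutatorElement_inv]

theorem commutatorElement_mul_right_of_le_center (a b c : G) :
    ⁅a, b * c⁆ = ⁅a, b⁆ * ⁅a, c⁆ := by
  rw [← commutatorElement_inv, commutatorElement_mul_left_of_le_center hG, mul_inv_rev,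
    commutatorElement_inv, commutatorElement_inv, (commute_commutatorElement hG a c _).eq]

theorem commutatorElement_inv_right_of_le_center (a b : G) : ⁅a, b⁻¹⁆ = ⁅a, b⁆⁻¹ := by
  rw [← commutatorElement_inv, commutatorElement_inv_left_of_le_center hG, commutatorElement_inv]

theorem commutatorElement_pow_left_of_le_center (a b : G) (n : ℕ) :
    ⁅a ^ n, b⁆ = ⁅a, b⁆ ^ n := by
  induction n with
  | zero => simp
  | succ n ih => rw [pow_succ, commutatorElement_mul_left_of_le_center hG, ih, pow_succ]

theorem commutatorElement_pow_right_of_le_center (a b : G) (n : ℕ) :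
    ⁅a, b ^ n⁆ = ⁅a, b⁆ ^ n := by
  induction n with
  | zero => simp
  | succ n ih => rw [pow_succ, commutatorElement_mul_right_of_le_center hG, ih, pow_succ]

theorem commutator_top_eq_closure_image2 {S : Set G} (hS : closure S = ⊤) :
    ⁅(⊤ : Subgroup G), ⊤⁆ = closure (Set.image2 (⁅·, ·⁆) S S) := by
  suffices h : ∀ a b : G, ⁅a, b⁆ ∈ closure (Set.image2 (⁅·, ·⁆) S S) by
    refine le_antisymm (commutator_le.mpr fun a _ b _ => h a b) (closure_le _ |>.mpr ?_)
    rintro _ ⟨a, -, b, -, rfl⟩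
    exact commutator_mem_commutator (mem_top a) (mem_top b)
  intro a b
  have ha : a ∈ closure S := hS ▸ mem_top a
  have hb : b ∈ closure S := hS ▸ mem_top b
  induction ha, hb using closure_induction₂ with
  | mem x y hx hy => exact subset_closure (Set.mem_image2_of_mem hx hy)
  | one_left => simp
  | one_right => simp
  | mul_left x y z _ _ _ hxz hyz =>
    rw [commutatorElement_mul_left_of_le_center hG]; exact mul_mem hxz hyz
  | mul_right y z x _ _ _ hxy hxz =>
    rw [commutatorElement_mul_right_of_le_center hG]; exact mul_mem hxy hxz
  | inv_left x y _ _ hxy => rw [commutatorElement_inv_left_of_le_center hG]; exact inv_mem hxy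
  | inv_right x y _ _ hxy => rw [commutatorElement_inv_right_of_le_center hG]; exact inv_mem hxy

theorem commutator_top_fg [Group.FG G] : (⁅(⊤ : Subgroup G), ⊤⁆ : Subgroup G).FG := by
  obtain ⟨S, hS, hSfin⟩ := Group.fg_iff.mp ‹Group.FG G›
  exact (fg_iff _).mpr ⟨_, (commutator_top_eq_closure_image2 hG hS).symm, hSfin.image2 _ hSfin⟩

theorem isMulCommutative_commutator_top : IsMulCommutative (⁅(⊤ : Subgroup G), ⊤⁆ : Subgroup G) :=
  le_centralizer_iff_isMulCommutative.mp (hG.trans (center_le_centralizer _))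

theorem pow_mem_commutator_of_mem_commutator_top {L : Subgroup G} {n : ℕ} (hn : ∀ a, a ^ n ∈ L)
    {k : G} (hk : k ∈ ⁅(⊤ : Subgroup G), (⊤ : Subgroup G)⁆) : k ^ (n * n) ∈ ⁅L, L⁆ := by
  rw [Subgroup.commutator_def] at hk
  induction hk using closure_induction with
  | mem _ h =>
    obtain ⟨a, -, b, -, rfl⟩ := h
    rw [pow_mul, ← commutatorElement_pow_left_of_le_center hG,
      ← commutatorElement_pow_right_of_le_center hG]
    exact commutator_mem_commutator (hn a) (hn b)
  | one => simp
  | mul x y hx _ ihx ihy =>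
    have hxy : Commute x y := (mem_center_iff.mp (hG (by rwa [Subgroup.commutator_def])) y).symm
    rw [hxy.mul_pow]
    exact mul_mem ihx ihy
  | inv x _ ihx => rw [inv_pow]; exact inv_mem ihx

end CommutatorCentral

theorem stmt_15 (H : Type*) [Group H] [Group.FG H]
    (hnil : ⁅⁅(⊤ : Subgroup H), (⊤ : Subgroup H)⁆, (⊤ : Subgroup H)⁆ = ⊥)
    (L : Subgroup H) (hL : L.index ≠ 0) :
    ⁅L, L⁆.relIndex ⁅(⊤ : Subgroup H), (⊤ : Subgroup H)⁆ ≠ 0 := by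
  have hcenter : ⁅(⊤ : Subgroup H), ⊤⁆ ≤ Subgroup.center H := by
    have h := Subgroup.commutator_eq_bot_iff_le_centralizer.mp hnil
    rwa [Subgroup.coe_top, Subgroup.centralizer_univ] at h
  have := isMulCommutative_commutator_top hcenter
  have he : L.index ! * L.index ! ≠ 0 := by positivity
  exact Subgroup.relIndex_ne_zero_of_forall_pow_mem (commutator_top_fg hcenter) he fun _ hk =>
    pow_mem_commutator_of_mem_commutator_top hcenter (Subgroup.pow_factorial_index_mem hL) hk
end
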